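/- arXiv:1810.13312 — 3 statements merged into one kernel-verified Lean document; each statement's English description precedes it below -/
import Mathlib

section
/- For any finite commutative ring R with identity 1 ≠ 0, the probability that two elements chosen uniformly at random (with replacement) have product zero is at most 3/4, i.e., |{(x,y) ∈ R × R : xy = 0}| ≤ (3/4)·|R|². -/
/-!
For `x ≠ 0` the right annihilator of `x` is a proper additive subgroup of `R` (it misses `1`),
so it has at most `|R| / 2` elements, while `x = 0` is annihilated by all of `R`. Summing over `x`
gives `2 · #{xy = 0} ≤ |R| (|R| + 1)`, which is at most `(3/2) |R|²` as soon as `|R| ≥ 2`.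
-/

open Finset

theorem AddSubgroup.two_mul_card_le_of_ne_top {G : Type*} [AddGroup G] [Finite G]
    {H : AddSubgroup G} (hH : H ≠ ⊤) : 2 * Nat.card H ≤ Nat.card G := by
  rw [← H.card_mul_index, mul_comm]
  exact Nat.mul_le_mul_left _ (AddSubgroup.one_lt_index_of_ne_top hH)

theorem two_mul_card_mul_eq_zero_le_of_ne_zero {R : Type*} [Ring R] [Fintype R] [DecidableEq R]
    {x : R} (hx : x ≠ 0) : 2 * #{y | x * y = 0} ≤ Fintype.card R := by
  have hker : (AddMonoidHom.mulLeft x).ker ≠ ⊤ := fun h =>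
    hx (by simpa using DFunLike.congr_fun (AddMonoidHom.ker_eq_top_iff.mp h) 1)
  have hcard : #{y | x * y = 0} = Nat.card (AddMonoidHom.mulLeft x).ker := by
    rw [← Fintype.card_subtype, ← Nat.card_eq_fintype_card]
    rfl
  rw [hcard, ← Nat.card_eq_fintype_card]
  exact AddSubgroup.two_mul_card_le_of_ne_top hker

theorem card_filter_mul_eq_zero_eq_sum {R : Type*} [Mul R] [Zero R] [Fintype R] [DecidableEq R] :
    #{p : R × R | p.1 * p.2 = 0} = ∑ x : R, #{y | x * y = 0} := by
  simp only [card_filter, Fintype.sum_prod_type]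

theorem two_mul_card_filter_mul_eq_zero_le (R : Type*) [Ring R] [Fintype R] [DecidableEq R] :
    2 * #{p : R × R | p.1 * p.2 = 0} ≤ Fintype.card R * (Fintype.card R + 1) := by
  have hzero : #{y : R | 0 * y = 0} = Fintype.card R := by simp
  have hrest : 2 * ∑ x ∈ univ.erase (0 : R), #{y | x * y = 0} ≤
      (Fintype.card R - 1) * Fintype.card R := by
    rw [mul_sum]
    calc ∑ x ∈ univ.erase (0 : R), 2 * #{y | x * y = 0}
        ≤ ∑ x ∈ univ.erase (0 : R), Fintype.card R :=
          sum_le_sum fun x hx => two_mul_card_mul_eq_zero_le_of_ne_zero (mem_erase.mp hx).1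
      _ = (Fintype.card R - 1) * Fintype.card R := by
          rw [sum_const, smul_eq_mul, card_erase_of_mem (mem_univ _), card_univ]
  rw [card_filter_mul_eq_zero_eq_sum, ← add_sum_erase _ _ (mem_univ 0), hzero]
  have hpos : 1 ≤ Fintype.card R := Fintype.card_pos
  zify [hpos] at hrest ⊢
  linarith

theorem stmt_2 (R : Type*) [CommRing R] [Fintype R] [Nontrivial R] [DecidableEq R] :
    4 * (Finset.univ.filter fun p : R × R => p.1 * p.2 = 0).card ≤ 3 * (Fintype.card R) ^ 2 := by
  have h := two_mul_card_filter_mul_eq_zero_le R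
  have hn : 2 ≤ Fintype.card R := Fintype.one_lt_card
  nlinarith
end

section
/- For n with prime factorization n = p₁^{k₁}···p_r^{k_r}, the probability P(ℤ/nℤ) that two random elements of ℤ/nℤ multiply to zero equals ∏_{i=1}^r ((k_i+1)p_i - k_i)/p_i^{k_i+1}. -/
open Finset

lemma ker_count (n : ℕ) [NeZero n] (x : ZMod n) :
    (Finset.univ.filter fun y : ZMod n => x * y = 0).card = n.gcd x.val := by
  classical
  set f : ZMod n →+ ZMod n := AddMonoidHom.mulLeft x with hf
  have hrange : f.range = AddSubgroup.zmultiples x := by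
    ext z
    simp only [AddMonoidHom.mem_range, AddSubgroup.mem_zmultiples_iff]
    constructor
    · rintro ⟨y, rfl⟩
      refine ⟨(y.val : ℤ), ?_⟩
      have : ((y.val : ℤ) : ZMod n) = y := by
        push_cast
        exact ZMod.natCast_rightInverse y
      rw [zsmul_eq_mul, this]
      simp [f, AddMonoidHom.mulLeft, mul_comm]
    · rintro ⟨k, rfl⟩
      exact ⟨(k : ZMod n), by simp [f, AddMonoidHom.mulLeft, zsmul_eq_mul, mul_comm]⟩
  have hcardrange : Nat.card f.range = n / n.gcd x.val := by
    rw [hrange, Nat.card_zmultiples]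
    conv_lhs => rw [show x = ((x.val : ℕ) : ZMod n) from (ZMod.natCast_rightInverse x).symm]
    exact ZMod.addOrderOf_coe x.val (NeZero.ne n)
  have hquot : Nat.card (ZMod n ⧸ f.ker) = n / n.gcd x.val := by
    rw [Nat.card_congr (QuotientAddGroup.quotientKerEquivRange f).toEquiv, hcardrange]
  have htot : Nat.card (ZMod n) = Nat.card (ZMod n ⧸ f.ker) * Nat.card f.ker :=
    AddSubgroup.card_eq_card_quotient_mul_card_addSubgroup f.ker
  rw [Nat.card_zmod, hquot] at htot
  have hg : n.gcd x.val ∣ n := Nat.gcd_dvd_left _ _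
  have hn0 : n ≠ 0 := NeZero.ne n
  have hne : n / n.gcd x.val ≠ 0 := by
    have : 0 < n.gcd x.val := Nat.gcd_pos_of_pos_left _ (Nat.pos_of_ne_zero hn0)
    exact Nat.div_ne_zero_iff.mpr ⟨by omega, Nat.le_of_dvd (Nat.pos_of_ne_zero hn0) hg⟩
  have hker : Nat.card f.ker = n.gcd x.val := by
    have h2 : n / n.gcd x.val * n.gcd x.val = n := Nat.div_mul_cancel hg
    exact Nat.eq_of_mul_eq_mul_left (Nat.pos_of_ne_zero hne) (by omega)
  rw [← hker, Nat.card_eq_fintype_card, ← Fintype.card_subtype]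
  exact Fintype.card_congr (Equiv.subtypeEquivRight (fun y => by
    simp [f, AddMonoidHom.mem_ker]))

/-- pair count as Nat.card, total function -/
noncomputable def pc (m : ℕ) : ℕ := Nat.card {q : ZMod m × ZMod m // q.1 * q.2 = 0}

lemma pc_eq_filter (n : ℕ) [NeZero n] :
    pc n = (Finset.univ.filter fun q : ZMod n × ZMod n => q.1 * q.2 = 0).card := by
  classical
  rw [pc, Nat.card_eq_fintype_card, Fintype.card_subtype]

lemma pc_one : pc 1 = 1 := by
  classical
  rw [pc_eq_filter]
  decide

lemma pc_mul {m n : ℕ} (h : m.Coprime n) : pc (m * n) = pc m * pc n := by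
  classical
  rcases eq_or_ne m 0 with rfl | hm
  · have : n = 1 := by simpa [Nat.coprime_zero_left] using h
    subst this; simp [pc_one]
  rcases eq_or_ne n 0 with rfl | hn
  · have : m = 1 := by simpa [Nat.coprime_zero_right] using h
    subst this; simp [pc_one]
  haveI : NeZero m := ⟨hm⟩
  haveI : NeZero n := ⟨hn⟩
  haveI : NeZero (m * n) := ⟨mul_ne_zero hm hn⟩
  let e := ZMod.chineseRemainder h
  have E1 : {q : ZMod (m * n) × ZMod (m * n) // q.1 * q.2 = 0} ≃
      {q : (ZMod m × ZMod n) × (ZMod m × ZMod n) // q.1 * q.2 = 0} :=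
    (Equiv.prodCongr e.toEquiv e.toEquiv).subtypeEquiv (fun q => by
      simp only [Equiv.prodCongr_apply, Prod.map, RingEquiv.toEquiv_eq_coe, EquivLike.coe_coe]
      rw [← map_mul]
      exact (EmbeddingLike.map_eq_zero_iff).symm)
  have E2 : {q : (ZMod m × ZMod n) × (ZMod m × ZMod n) // q.1 * q.2 = 0} ≃
      {q : (ZMod m × ZMod m) × (ZMod n × ZMod n) // q.1.1 * q.1.2 = 0 ∧ q.2.1 * q.2.2 = 0} :=
    (Equiv.prodProdProdComm (ZMod m) (ZMod n) (ZMod m) (ZMod n)).subtypeEquiv (fun q => by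
      simp [Equiv.prodProdProdComm, Prod.ext_iff, Prod.mul_def])
  have E3 : {q : (ZMod m × ZMod m) × (ZMod n × ZMod n) //
        q.1.1 * q.1.2 = 0 ∧ q.2.1 * q.2.2 = 0} ≃
      {q : ZMod m × ZMod m // q.1 * q.2 = 0} × {q : ZMod n × ZMod n // q.1 * q.2 = 0} :=
    Equiv.subtypeProdEquivProd (p := fun a : ZMod m × ZMod m => a.1 * a.2 = 0)
      (q := fun b : ZMod n × ZMod n => b.1 * b.2 = 0)
  have key := (E1.trans E2).trans E3
  rw [pc, pc, pc, Nat.card_congr key, Nat.card_prod]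

lemma pc_factorization {n : ℕ} (hn : n ≠ 0) :
    pc n = n.factorization.prod fun p k => pc (p ^ k) :=
  Nat.multiplicative_factorization pc (fun _ _ h => pc_mul h) pc_one hn

lemma pairs_eq_sum (n : ℕ) [NeZero n] :
    (Finset.univ.filter fun q : ZMod n × ZMod n => q.1 * q.2 = 0).card
      = ∑ x : ZMod n, n.gcd x.val := by
  classical
  rw [Finset.card_eq_sum_card_fiberwise
    (f := fun q : ZMod n × ZMod n => q.1) (t := Finset.univ) (fun _ _ => Finset.mem_univ _)]
  refine Finset.sum_congr rfl fun x _ => ?_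
  rw [← ker_count n x]
  apply Finset.card_bij (fun q _ => q.2)
  · intro a ha
    simp only [Finset.mem_filter, Finset.mem_univ, true_and] at ha ⊢
    rw [← ha.2]; exact ha.1
  · intro a ha b hb hab
    simp only [Finset.mem_filter, Finset.mem_univ, true_and] at ha hb
    exact Prod.ext (ha.2.trans hb.2.symm) hab
  · intro y hy
    simp only [Finset.mem_filter, Finset.mem_univ, true_and] at hy
    exact ⟨(x, y), by simp [hy], rfl⟩

/-- gcd-sum (Pillai) -/
def S (m : ℕ) : ℕ := ∑ a ∈ Finset.range m, m.gcd a

lemma sum_val_eq (n : ℕ) [NeZero n] : (∑ x : ZMod n, n.gcd x.val) = S n := by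
  classical
  rw [S]
  apply Finset.sum_nbij' (i := fun x : ZMod n => x.val) (j := fun a : ℕ => (a : ZMod n))
  · intro x _; exact Finset.mem_range.mpr (ZMod.val_lt x)
  · intro a _; exact Finset.mem_univ _
  · intro x _; exact ZMod.natCast_rightInverse x
  · intro a ha; exact ZMod.val_cast_of_lt (Finset.mem_range.mp ha)
  · intro x _; rfl

lemma pc_eq_S (n : ℕ) [NeZero n] : pc n = S n := by
  rw [pc_eq_filter, pairs_eq_sum, sum_val_eq]

lemma S_one : S 1 = 1 := by simp [S]

lemma S_rec (p k : ℕ) (hp : p.Prime) :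
    S (p ^ (k + 1)) + p ^ k = p ^ (k + 1) + p * S (p ^ k) := by
  classical
  have hbij : ∀ (F : ℕ → ℕ), (∑ a ∈ (Finset.range (p ^ (k + 1))).filter (p ∣ ·), F a)
      = ∑ b ∈ Finset.range (p ^ k), F (p * b) := by
    intro F
    apply Finset.sum_nbij' (i := fun a => a / p) (j := fun b => p * b)
    · intro a ha
      simp only [Finset.mem_filter, Finset.mem_range] at ha
      obtain ⟨c, rfl⟩ := ha.2
      have h1 := ha.1
      rw [pow_succ'] at h1
      rw [Nat.mul_div_cancel_left c hp.pos]
      exact Finset.mem_range.mpr (lt_of_mul_lt_mul_left h1 (Nat.zero_le p))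
    · intro b hb
      simp only [Finset.mem_filter, Finset.mem_range] at hb ⊢
      exact ⟨by rw [pow_succ']; exact (Nat.mul_lt_mul_left hp.pos).mpr hb, dvd_mul_right p b⟩
    · intro a ha
      simp only [Finset.mem_filter] at ha
      exact Nat.mul_div_cancel' ha.2
    · intro b _; exact Nat.mul_div_cancel_left b hp.pos
    · intro a ha
      simp only [Finset.mem_filter] at ha
      rw [Nat.mul_div_cancel' ha.2]
  have hcard : ((Finset.range (p ^ (k + 1))).filter (p ∣ ·)).card = p ^ k := by
    have := hbij (fun _ => 1)
    simpa using this
  have hsplit := Finset.sum_filter_add_sum_filter_not (Finset.range (p ^ (k + 1)))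
    (p ∣ ·) (fun a => (p ^ (k + 1)).gcd a)
  have h1 : (∑ a ∈ (Finset.range (p ^ (k + 1))).filter (fun a => ¬ p ∣ a),
      (p ^ (k + 1)).gcd a) = p ^ (k + 1) - p ^ k := by
    have hone : ∀ a ∈ (Finset.range (p ^ (k + 1))).filter (fun a => ¬ p ∣ a),
        (p ^ (k + 1)).gcd a = 1 := by
      intro a ha
      simp only [Finset.mem_filter] at ha
      exact Nat.Coprime.pow_left _ ((Nat.Prime.coprime_iff_not_dvd hp).mpr ha.2)
    rw [Finset.sum_congr rfl hone, Finset.sum_const, smul_eq_mul, mul_one]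
    have := Finset.card_filter_add_card_filter_not
      (s := Finset.range (p ^ (k + 1))) (p := (p ∣ ·))
    rw [hcard, Finset.card_range] at this
    omega
  have h2 : (∑ a ∈ (Finset.range (p ^ (k + 1))).filter (p ∣ ·),
      (p ^ (k + 1)).gcd a) = p * S (p ^ k) := by
    rw [hbij]
    rw [S, Finset.mul_sum]
    refine Finset.sum_congr rfl fun b _ => ?_
    rw [pow_succ', Nat.gcd_mul_left]
  have hle : p ^ k ≤ p ^ (k + 1) := Nat.pow_le_pow_right hp.pos k.le_succ
  have hS : S (p ^ (k + 1)) = p ^ (k + 1) - p ^ k + p * S (p ^ k) := by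
    rw [S, ← hsplit, h2, h1]; omega
  omega

lemma S_closed (p k : ℕ) (hp : p.Prime) :
    (S (p ^ (k + 1)) : ℚ) = (((k : ℚ) + 2) * p - ((k : ℚ) + 1)) * (p : ℚ) ^ k := by
  induction k with
  | zero =>
    have h := S_rec p 0 hp
    rw [pow_zero, S_one, mul_one] at h
    have hq : (S (p ^ 1) : ℚ) + 1 = (p : ℚ) ^ 1 + p := by exact_mod_cast h
    push_cast
    linear_combination hq
  | succ j ih =>
    have h := S_rec p (j + 1) hp
    have hq : (S (p ^ (j + 2)) : ℚ) + (p : ℚ) ^ (j + 1)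
        = (p : ℚ) ^ (j + 2) + p * (S (p ^ (j + 1)) : ℚ) := by exact_mod_cast h
    rw [ih] at hq
    push_cast
    linear_combination hq

theorem stmt_7 (n : ℕ) (hn : 2 ≤ n) [NeZero n] :
    ((Finset.univ.filter fun q : ZMod n × ZMod n => q.1 * q.2 = 0).card : ℚ) / (n : ℚ) ^ 2 =
      ∏ p ∈ n.primeFactors,
        (((n.factorization p + 1) * p - n.factorization p : ℚ)) / (p : ℚ) ^ (n.factorization p + 1) := by
  classical
  have hn0 : n ≠ 0 := by omega
  have hnum : ((Finset.univ.filter fun q : ZMod n × ZMod n => q.1 * q.2 = 0).card : ℚ)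
      = ∏ p ∈ n.primeFactors, (pc (p ^ n.factorization p) : ℚ) := by
    rw [← pc_eq_filter n, pc_factorization hn0, Finsupp.prod]
    push_cast
    rfl
  have hden : (n : ℚ) ^ 2 = ∏ p ∈ n.primeFactors, (p : ℚ) ^ (2 * n.factorization p) := by
    have h := Nat.factorization_prod_pow_eq_self hn0
    rw [Finsupp.prod] at h
    have : (n : ℚ) = ∏ p ∈ n.primeFactors, (p : ℚ) ^ n.factorization p := by
      exact_mod_cast congrArg (Nat.cast : ℕ → ℚ) h.symm
    rw [this, ← Finset.prod_pow]
    refine Finset.prod_congr rfl fun p _ => ?_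
    rw [← pow_mul, mul_comm]
  rw [hnum, hden, ← Finset.prod_div_distrib]
  refine Finset.prod_congr rfl fun p hp => ?_
  have hpp : p.Prime := Nat.prime_of_mem_primeFactors hp
  have hk : n.factorization p ≠ 0 := by
    have : p ∈ (Nat.factorization n).support := by rw [Nat.support_factorization]; exact hp
    exact Finsupp.mem_support_iff.mp this
  obtain ⟨j, hj⟩ : ∃ j, n.factorization p = j + 1 := ⟨n.factorization p - 1, by omega⟩
  rw [hj]
  haveI : NeZero (p ^ (j + 1)) := ⟨pow_ne_zero _ hpp.ne_zero⟩
  rw [pc_eq_S, S_closed p j hpp]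
  have hp0 : (p : ℚ) ≠ 0 := Nat.cast_ne_zero.mpr hpp.ne_zero
  field_simp
  push_cast
  ring
end

section
/- Equality P(R) = (2l + |Z(R)| - 1)/l² holds in the lower bound if and only if every nonzero zero-divisor x of R satisfies |Ann(x)| = 2. -/
/-!
Write `Z` for the nonzero zero-divisors and `a x = |Ann(x)|`. Counting the pairs with `x * y = 0`
row by row gives `N = ∑ₓ a x`. The row of `0` contributes `l`, each of the `l - 1 - |Z|` nonzero
non-zero-divisors contributes `1` (its annihilator is `{0}`), and each `x ∈ Z` contributes
`a x ≥ 2` (its annihilator contains `0` and a nonzero witness). Hence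
`N + |Z| + 1 = 2l + ∑_{x ∈ Z} a x ≥ 2l + 2|Z|`, with equality exactly when `a x = 2` on all of `Z`.
-/

open Finset

namespace ZeroProduct

variable {R : Type*} [MulZeroClass R] [Fintype R] [DecidableEq R]

variable (R) in
def zeroDivisorFinset : Finset R :=
  univ.filter fun x => x ≠ 0 ∧ ∃ y : R, y ≠ 0 ∧ x * y = 0

def annFinset (x : R) : Finset R :=
  univ.filter fun y => x * y = 0

theorem mem_zeroDivisorFinset {x : R} :
    x ∈ zeroDivisorFinset R ↔ x ≠ 0 ∧ ∃ y : R, y ≠ 0 ∧ x * y = 0 := by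
  simp [zeroDivisorFinset]

theorem card_zero_products_eq_sum_card_annFinset :
    #(univ.filter fun p : R × R => p.1 * p.2 = 0) = ∑ x : R, #(annFinset x) := by
  rw [card_filter, ← univ_product_univ, sum_product]
  exact sum_congr rfl fun x _ => (card_filter _ _).symm

theorem annFinset_zero : annFinset (0 : R) = univ := by
  simp [annFinset]

theorem annFinset_eq_singleton_zero {x : R} (hx : x ≠ 0) (hxZ : x ∉ zeroDivisorFinset R) :
    annFinset x = {0} := by
  ext y
  simp only [annFinset, mem_filter, mem_univ, true_and, mem_singleton]
  refine ⟨fun hxy => ?_, fun hy => hy ▸ mul_zero x⟩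
  by_contra hy
  exact hxZ (mem_zeroDivisorFinset.2 ⟨hx, y, hy, hxy⟩)

theorem two_le_card_annFinset {x : R} (hx : x ∈ zeroDivisorFinset R) :
    2 ≤ #(annFinset x) := by
  obtain ⟨-, y, hy, hxy⟩ := mem_zeroDivisorFinset.1 hx
  calc 2 = #({0, y} : Finset R) := (card_pair (Ne.symm hy)).symm
    _ ≤ #(annFinset x) := card_le_card <| by
      simp [insert_subset_iff, annFinset, hxy]

theorem zeroDivisorFinset_subset_erase_zero : zeroDivisorFinset R ⊆ univ.erase 0 :=
  fun x hx => mem_erase.2 ⟨(mem_zeroDivisorFinset.1 hx).1, mem_univ x⟩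

theorem sum_card_annFinset_add_card_add_one :
    ∑ x : R, #(annFinset x) + #(zeroDivisorFinset R) + 1 =
      2 * Fintype.card R + ∑ x ∈ zeroDivisorFinset R, #(annFinset x) := by
  have hZ := zeroDivisorFinset_subset_erase_zero (R := R)
  have hrest : ∑ x ∈ univ.erase 0 \ zeroDivisorFinset R, #(annFinset x) =
      #(univ.erase (0 : R) \ zeroDivisorFinset R) := by
    refine card_eq_sum_ones _ ▸ sum_congr rfl fun x hx => ?_
    obtain ⟨hx0, hxZ⟩ := mem_sdiff.1 hx
    rw [annFinset_eq_singleton_zero (ne_of_mem_erase hx0) hxZ, card_singleton]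
  have hcard : #(univ.erase (0 : R) \ zeroDivisorFinset R) + #(zeroDivisorFinset R) + 1 =
      Fintype.card R := by
    rw [card_sdiff_add_card_eq_card hZ, card_erase_add_one (mem_univ 0), card_univ]
  rw [← sum_erase_add univ _ (mem_univ 0), ← sum_sdiff hZ, hrest, annFinset_zero, card_univ]
  omega

theorem sum_card_annFinset_add_one_eq_iff :
    ∑ x : R, #(annFinset x) + 1 = 2 * Fintype.card R + #(zeroDivisorFinset R) ↔
      ∀ x ∈ zeroDivisorFinset R, #(annFinset x) = 2 := by
  have hsum := sum_card_annFinset_add_card_add_one (R := R)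
  have htwo : 2 * #(zeroDivisorFinset R) = ∑ _x ∈ zeroDivisorFinset R, 2 := by
    rw [sum_const, smul_eq_mul, mul_comm]
  calc _ ↔ ∑ _x ∈ zeroDivisorFinset R, 2 = ∑ x ∈ zeroDivisorFinset R, #(annFinset x) := by
          omega
    _ ↔ _ := by
      rw [sum_eq_sum_iff_of_le fun x hx => two_le_card_annFinset hx]
      exact forall₂_congr fun _ _ => eq_comm

end ZeroProduct

open ZeroProduct in
theorem stmt_15_general (R : Type*) [CommRing R] [Fintype R] [DecidableEq R]
    (l : ℕ) (hl : Fintype.card R = l) :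
    (((Finset.univ.filter fun p : R × R => p.1 * p.2 = 0).card : ℚ) / (l : ℚ) ^ 2 =
        (2 * l + (Finset.univ.filter fun x : R =>
          x ≠ 0 ∧ ∃ y : R, y ≠ 0 ∧ x * y = 0).card - 1) / (l : ℚ) ^ 2) ↔
      ∀ x : R, (x ≠ 0 ∧ ∃ y : R, y ≠ 0 ∧ x * y = 0) →
        (Finset.univ.filter fun y : R => x * y = 0).card = 2 := by
  have hl0 : (l : ℚ) ^ 2 ≠ 0 := by
    subst hl
    exact pow_ne_zero 2 (Nat.cast_ne_zero.2 Fintype.card_ne_zero)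
  have key := sum_card_annFinset_add_one_eq_iff (R := R)
  rw [← card_zero_products_eq_sum_card_annFinset, hl] at key
  simp only [mem_zeroDivisorFinset] at key
  unfold zeroDivisorFinset annFinset at key
  rw [div_left_inj' hl0, eq_sub_iff_add_eq]
  exact_mod_cast key

theorem stmt_15 (R : Type*) [CommRing R] [Fintype R] [Nontrivial R] [DecidableEq R]
    (l : ℕ) (hl : Fintype.card R = l) :
    (((Finset.univ.filter fun p : R × R => p.1 * p.2 = 0).card : ℚ) / (l : ℚ) ^ 2 =
        (2 * l + (Finset.univ.filter fun x : R =>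
          x ≠ 0 ∧ ∃ y : R, y ≠ 0 ∧ x * y = 0).card - 1) / (l : ℚ) ^ 2) ↔
      ∀ x : R, (x ≠ 0 ∧ ∃ y : R, y ≠ 0 ∧ x * y = 0) →
        (Finset.univ.filter fun y : R => x * y = 0).card = 2 :=
  stmt_15_general R l hl
end
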